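/- Let (ξ_i, F_i)_{i=1,...,n} be martingale differences with −b ≤ ξ_i ≤ 1 a.s. for some constant b > 0, and X_k = Σ_{i=1}^k ξ_i. Then for every x ≥ 0, P(max_{1≤k≤n} X_k ≥ x) ≤ exp{−2x²/U_n(x,b)}, where U_n(x,b) = min{n(1+b)², 4(nb + x/3)}. -/

import Mathlib

/-!
For `l ≥ 0`, convexity bounds `exp (l * t)` on `[-b, 1]` by its chord through `t = -b` and `t = 1`.
Since `E[ξ i | ℱ (i - 1)] = 0`, the conditional moment generating function of every `ξ i` at `l` is
therefore at most that of the centred law on `{-b, 1}`, `twoPointMGF b l`. Whenever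
`twoPointMGF b l ≤ exp c`, the process `exp (l * X k - k * c)` is a nonnegative supermartingale,
and optional stopping at the first time it exceeds `exp (l * x - n * c)` bounds the probability by
`exp (n * c - l * x)`. Hoeffding's lemma, `c = l ^ 2 * (1 + b) ^ 2 / 8`, and Bennett's bound,
`c = b * (exp l - 1 - l) ≤ b * l ^ 2 / (2 * (1 - l / 3))`, give the two terms of `U_n(x, b)` after
optimising in `l`.
-/

open MeasureTheory ProbabilityTheory Real Finset Nat

lemma exp_le_quadratic_of_nonpos {u : ℝ} (hu : u ≤ 0) : exp u ≤ 1 + u + u ^ 2 / 2 := by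
  let f : ℝ → ℝ := fun v ↦ 1 - v + v ^ 2 / 2 - exp (-v)
  have hf : ∀ v, HasDerivAt f (-1 + v + exp (-v)) v := fun v ↦ by
    refine ((((hasDerivAt_id v).const_sub 1).add ((hasDerivAt_pow 2 v).div_const 2)).sub
      (hasDerivAt_neg v).exp).congr_deriv ?_
    push_cast
    ring
  have hmono : MonotoneOn f (Set.Ici 0) :=
    monotoneOn_of_deriv_nonneg (convex_Ici 0) (fun v _ ↦ (hf v).continuousAt.continuousWithinAt)
      (fun v _ ↦ (hf v).differentiableAt.differentiableWithinAt)
      (fun v _ ↦ by rw [(hf v).deriv]; linarith [add_one_le_exp (-v)])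
  have := hmono Set.self_mem_Ici (Set.mem_Ici.2 (neg_nonneg.2 hu)) (neg_nonneg.2 hu)
  norm_num [f] at this
  exact this

lemma exp_sub_one_sub_le_of_lt_three {l : ℝ} (hl : 0 ≤ l) (hl3 : l < 3) :
    exp l - 1 - l ≤ l ^ 2 / (2 * (1 - l / 3)) := by
  have hexp : HasSum (fun k : ℕ ↦ l ^ (k + 2) / (k + 2)!) (exp l - 1 - l) := by
    have := (hasSum_nat_add_iff' 2).2 (exp_eq_exp_ℝ ▸ NormedSpace.expSeries_div_hasSum_exp l)
    simpa [Finset.sum_range_succ, sub_sub] using this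
  have hgeo : HasSum (fun k : ℕ ↦ l ^ 2 / 2 * (l / 3) ^ k) (l ^ 2 / 2 * (1 - l / 3)⁻¹) :=
    (hasSum_geometric_of_lt_one (by positivity) (by linarith)).mul_left _
  calc exp l - 1 - l ≤ l ^ 2 / 2 * (1 - l / 3)⁻¹ := hasSum_le (fun k ↦ ?_) hexp hgeo
    _ = l ^ 2 / (2 * (1 - l / 3)) := by field_simp
  have hfact : (2 * 3 ^ k : ℝ) ≤ (k + 2)! := by
    have := Nat.factorial_mul_pow_le_factorial (m := 2) (n := k)
    rw [add_comm 2 k] at this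
    exact_mod_cast this
  calc l ^ (k + 2) / (k + 2)! ≤ l ^ (k + 2) / (2 * 3 ^ k) := by gcongr
    _ = l ^ 2 / 2 * (l / 3) ^ k := by rw [div_pow]; ring

/-- The moment generating function of the law with mean `0` on `{-b, 1}`, which has weights
`1 / (1 + b)` and `b / (1 + b)`. -/
noncomputable def twoPointMGF (b l : ℝ) : ℝ := (exp (-(l * b)) + b * exp l) / (1 + b)

lemma exp_mul_le_twoPointMGF_add_mul {b l t : ℝ} (hb : 0 < 1 + b) (hbt : -b ≤ t) (ht : t ≤ 1) :
    exp (l * t) ≤ twoPointMGF b l + (exp l - exp (-(l * b))) / (1 + b) * t := by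
  have hconv := convexOn_exp.2 (Set.mem_univ l) (Set.mem_univ (-(l * b)))
    (div_nonneg (by linarith) hb.le : 0 ≤ (t + b) / (1 + b))
    (div_nonneg (by linarith) hb.le : 0 ≤ (1 - t) / (1 + b)) (by field_simp; ring)
  have harg : (t + b) / (1 + b) * l + (1 - t) / (1 + b) * -(l * b) = l * t := by
    field_simp; ring
  simp only [smul_eq_mul, harg] at hconv
  refine hconv.trans_eq ?_
  rw [twoPointMGF]
  field_simp
  ring

lemma twoPointMGF_le_exp_sq {b : ℝ} (hb : 0 ≤ b) (l : ℝ) :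
    twoPointMGF b l ≤ exp (l ^ 2 * (1 + b) ^ 2 / 8) := by
  have h1b : 0 < 1 + b := by linarith
  let ν : Measure ℝ := ENNReal.ofReal (1 + b)⁻¹ • (.dirac (-b) + ENNReal.ofReal b • .dirac 1)
  have hν : ∀ f : ℝ → ℝ, ∫ x, f x ∂ν = (f (-b) + b * f 1) / (1 + b) := by
    intro f
    rw [integral_smul_measure, integral_add_measure, integral_smul_measure]
    · simp [hb, h1b.le, div_eq_inv_mul]
    · exact integrable_dirac (by simp)
    · exact (integrable_dirac (by simp)).smul_measure (by simp)
  have : IsProbabilityMeasure ν := by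
    constructor
    simp only [ν, Measure.smul_apply, Measure.add_apply, measure_univ, smul_eq_mul, mul_one]
    rw [← ENNReal.ofReal_one, ← ENNReal.ofReal_add zero_le_one hb,
      ← ENNReal.ofReal_mul (by positivity)]
    congr 1
    field_simp
  have hIcc : ∀ᵐ x ∂ν, id x ∈ Set.Icc (-b) 1 := by
    refine Measure.ae_smul_measure ?_ _
    rw [ae_add_measure_iff]
    refine ⟨?_, Measure.ae_smul_measure ?_ _⟩ <;> simp [ae_dirac_eq] <;> linarith
  have hmean : ν[id] = 0 := by simp [hν]
  have hmgf :=
    (hasSubgaussianMGF_of_mem_Icc_of_integral_eq_zero aemeasurable_id hIcc hmean).mgf_le l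
  rw [mgf, hν] at hmgf
  convert hmgf using 2
  · simp [twoPointMGF]
  · simp only [sub_neg_eq_add, NNReal.coe_pow, NNReal.coe_div, coe_nnnorm, norm_eq_abs,
      abs_of_pos h1b, NNReal.coe_ofNat]
    ring

lemma twoPointMGF_le_exp_mul_exp_sub_one_sub {b l : ℝ} (hb : 0 ≤ b) (hl : 0 ≤ l) :
    twoPointMGF b l ≤ exp (b * (exp l - 1 - l)) := by
  have h1b : 0 < 1 + b := by linarith
  have hneg : exp (-(l * b)) ≤ 1 - l * b + b ^ 2 * (exp l - 1 - l) := by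
    have h1 := exp_le_quadratic_of_nonpos (neg_nonpos.2 (mul_nonneg hl hb))
    have h2 := quadratic_le_exp_of_nonneg hl
    nlinarith [sq_nonneg b]
  calc twoPointMGF b l ≤ 1 + b * (exp l - 1 - l) := by
        rw [twoPointMGF, div_le_iff₀ h1b]
        nlinarith
    _ ≤ exp (b * (exp l - 1 - l)) := by linarith [add_one_le_exp (b * (exp l - 1 - l))]

lemma exists_hoeffding_exponent {N b x : ℝ} (hN : 0 < N) (hb : 0 ≤ b) (hx : 0 ≤ x) :
    ∃ l c, 0 ≤ l ∧ 0 ≤ c ∧ twoPointMGF b l ≤ exp c ∧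
      N * c - l * x ≤ -(2 * x ^ 2 / (N * (1 + b) ^ 2)) := by
  have h1b : 0 < 1 + b := by linarith
  refine ⟨4 * x / (N * (1 + b) ^ 2), _, by positivity, by positivity,
    twoPointMGF_le_exp_sq hb _, le_of_eq ?_⟩
  field_simp
  ring

lemma exists_bernstein_exponent {N b x : ℝ} (hN : 0 < N) (hb : 0 < b) (hx : 0 ≤ x) :
    ∃ l c, 0 ≤ l ∧ 0 ≤ c ∧ twoPointMGF b l ≤ exp c ∧
      N * c - l * x ≤ -(2 * x ^ 2 / (4 * (N * b + x / 3))) := by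
  have hNb : 0 < N * b := mul_pos hN hb
  have hD : 0 < N * b + x / 3 := by positivity
  set l := x / (N * b + x / 3) with hl_def
  have hl : 0 ≤ l := by positivity
  have hl3 : l < 3 := by rw [div_lt_iff₀ hD]; linarith
  have hc : 0 ≤ exp l - 1 - l := by linarith [add_one_le_exp l]
  refine ⟨l, b * (exp l - 1 - l), hl, by positivity,
    twoPointMGF_le_exp_mul_exp_sub_one_sub hb.le hl, ?_⟩
  have h3 : 1 - l / 3 ≠ 0 := by linarith
  calc N * (b * (exp l - 1 - l)) - l * x = N * b * (exp l - 1 - l) - l * x := by ring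
    _ ≤ N * b * (l ^ 2 / (2 * (1 - l / 3))) - l * x := by
      gcongr
      exact exp_sub_one_sub_le_of_lt_three hl hl3
    _ = -(2 * x ^ 2 / (4 * (N * b + x / 3))) := by
      rw [hl_def] at h3 ⊢
      field_simp
      ring

lemma exists_refined_exponent {N b x : ℝ} (hN : 0 < N) (hb : 0 < b) (hx : 0 ≤ x) :
    ∃ l c, 0 ≤ l ∧ 0 ≤ c ∧ twoPointMGF b l ≤ exp c ∧
      N * c - l * x ≤ -(2 * x ^ 2 / min (N * (1 + b) ^ 2) (4 * (N * b + x / 3))) := by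
  rcases le_total (N * (1 + b) ^ 2) (4 * (N * b + x / 3)) with h | h
  · rw [min_eq_left h]
    exact exists_hoeffding_exponent hN hb.le hx
  · rw [min_eq_right h]
    exact exists_bernstein_exponent hN hb hx

section

variable {Ω : Type*} {m m₀ : MeasurableSpace Ω} {μ : Measure Ω}

lemma condExp_const_add_mul_ae_eq [IsFiniteMeasure μ] (hm : m ≤ m₀) {X : Ω → ℝ}
    (hX : Integrable X μ) (hX0 : μ[X|m] =ᵐ[μ] 0) (α β : ℝ) :
    μ[fun ω ↦ α + β * X ω|m] =ᵐ[μ] fun _ ↦ α := by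
  have hadd : μ[fun ω ↦ α + β * X ω|m] =ᵐ[μ] μ[fun _ ↦ α|m] + μ[fun ω ↦ β * X ω|m] :=
    condExp_add (integrable_const α) (hX.const_mul β) m
  have hmul : μ[fun ω ↦ β * X ω|m] =ᵐ[μ] β • μ[X|m] := condExp_smul β X m
  filter_upwards [hadd, hmul, hX0] with ω hadd hmul hX0
  simp [hadd, hmul, hX0, condExp_const hm]

lemma condExp_exp_mul_sub_le_one [IsFiniteMeasure μ] (hm : m ≤ m₀) {X : Ω → ℝ} {b l c : ℝ}
    (hb : 0 < 1 + b) (hX : Integrable X μ) (hX0 : μ[X|m] =ᵐ[μ] 0)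
    (hXb : ∀ᵐ ω ∂μ, -b ≤ X ω ∧ X ω ≤ 1) (hA : twoPointMGF b l ≤ exp c) :
    μ[fun ω ↦ exp (l * X ω - c)|m] ≤ᵐ[μ] 1 := by
  set B := (exp l - exp (-(l * b))) / (1 + b)
  have hchord : (fun ω ↦ exp (l * X ω - c)) ≤ᵐ[μ]
      fun ω ↦ exp (-c) * twoPointMGF b l + exp (-c) * B * X ω := by
    filter_upwards [hXb] with ω ⟨hbX, hX1⟩
    rw [sub_eq_add_neg, exp_add, mul_assoc, ← mul_add, mul_comm]
    exact mul_le_mul_of_nonneg_left (exp_mul_le_twoPointMGF_add_mul hb hbX hX1) (exp_pos _).le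
  have haff : Integrable (fun ω ↦ exp (-c) * twoPointMGF b l + exp (-c) * B * X ω) μ :=
    (integrable_const _).add (hX.const_mul _)
  have hexp : Integrable (fun ω ↦ exp (l * X ω - c)) μ :=
    haff.mono' (by fun_prop) (hchord.mono fun ω h ↦ by rwa [norm_of_nonneg (exp_pos _).le])
  filter_upwards [condExp_mono (m := m) hexp haff hchord,
    condExp_const_add_mul_ae_eq hm hX hX0 (exp (-c) * twoPointMGF b l) (exp (-c) * B)]
    with ω hle heq
  refine (hle.trans_eq heq).trans ?_
  calc exp (-c) * twoPointMGF b l ≤ exp (-c) * exp c := by gcongr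
    _ = 1 := by rw [← exp_add, neg_add_cancel, exp_zero]

theorem MeasureTheory.Supermartingale.mul_measureReal_exists_le_le [IsFiniteMeasure μ]
    {𝒢 : Filtration ℕ m₀} {f : ℕ → Ω → ℝ} (hf : Supermartingale f 𝒢 μ) (hf0 : 0 ≤ f)
    (ε : ℝ) (n : ℕ) :
    ε * μ.real {ω | ∃ k ≤ n, ε ≤ f k ω} ≤ μ[f 0] := by
  let τ : Ω → ℕ∞ := fun ω ↦ (hittingBtwn f {y | ε ≤ y} 0 n ω : ℕ)
  have hτ : IsStoppingTime 𝒢 τ :=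
    hf.stronglyAdapted.adapted.isStoppingTime_hittingBtwn measurableSet_Ici
  have hτn : ∀ ω, τ ω ≤ n := fun ω ↦ WithTop.coe_le_coe.2 (hittingBtwn_le ω)
  have hint : Integrable (stoppedValue f τ) μ := integrable_stoppedValue ℕ hτ hf.integrable hτn
  have hE : MeasurableSet {ω | ∃ k ≤ n, ε ≤ f k ω} := by
    simp only [Set.ofPred_exists]
    exact .iUnion fun k ↦ (MeasurableSet.const (k ≤ n)).inter <|
      measurableSet_le measurable_const ((hf.stronglyMeasurable k).measurable.le (𝒢.le k))
  have hstop : μ[stoppedValue f τ] ≤ μ[f 0] := by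
    have := hf.neg.expected_stoppedValue_mono (isStoppingTime_const 𝒢 0) hτ
      (fun ω ↦ WithTop.coe_le_coe.2 (zero_le _)) hτn
    simpa [stoppedValue, integral_neg] using this
  calc ε * μ.real {ω | ∃ k ≤ n, ε ≤ f k ω}
      ≤ ∫ ω in {ω | ∃ k ≤ n, ε ≤ f k ω}, stoppedValue f τ ω ∂μ := by
        refine setIntegral_ge_of_const_le_real hE (measure_ne_top _ _) (fun ω hω ↦ ?_)
          hint.integrableOn
        obtain ⟨k, hk, hεk⟩ := hω
        exact stoppedValue_hittingBtwn_mem ⟨k, ⟨zero_le _, hk⟩, hεk⟩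
    _ ≤ μ[stoppedValue f τ] := setIntegral_le_integral hint (.of_forall fun ω ↦ hf0 _ _)
    _ ≤ μ[f 0] := hstop

-- Frozen from time `n` on, so that it is a supermartingale indexed by all of `ℕ`.
noncomputable def expProcess (ξ : ℕ → Ω → ℝ) (n : ℕ) (l c : ℝ) (k : ℕ) (ω : Ω) : ℝ :=
  exp (l * ∑ i ∈ Icc 1 (min k n), ξ i ω - (min k n : ℕ) * c)

section expProcess

variable {ξ : ℕ → Ω → ℝ} {n k : ℕ} {l c : ℝ}

lemma expProcess_succ_of_lt (hk : k < n) :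
    expProcess ξ n l c (k + 1) = expProcess ξ n l c k * fun ω ↦ exp (l * ξ (k + 1) ω - c) := by
  ext ω
  simp only [expProcess, Pi.mul_apply, ← exp_add]
  rw [min_eq_left (Nat.succ_le_of_lt hk), min_eq_left hk.le, sum_Icc_succ_top (by omega)]
  push_cast
  ring_nf

lemma expProcess_succ_of_le (hk : n ≤ k) : expProcess ξ n l c (k + 1) = expProcess ξ n l c k := by
  ext ω
  simp only [expProcess]
  rw [min_eq_right hk, min_eq_right (hk.trans k.le_succ)]

lemma stronglyMeasurable_expProcess (𝒢 : Filtration ℕ m₀)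
    (hadapt : ∀ i, 1 ≤ i → i ≤ n → Measurable[𝒢 i] (ξ i)) (k : ℕ) :
    StronglyMeasurable[𝒢 k] (expProcess ξ n l c k) := by
  refine (Measurable.exp ((Finset.measurable_sum _ fun i hi ↦ ?_).const_mul l |>.sub_const _))
    |>.stronglyMeasurable
  obtain ⟨hi1, hik⟩ := mem_Icc.1 hi
  exact (hadapt i hi1 (hik.trans (min_le_right _ _))).mono (𝒢.mono (hik.trans (min_le_left _ _)))
    le_rfl

lemma integrable_exp_mul_sum_sub [IsFiniteMeasure μ] {s : Finset ℕ}
    (hmeas : ∀ i ∈ s, AEStronglyMeasurable (ξ i) μ) (hupper : ∀ i ∈ s, ∀ᵐ ω ∂μ, ξ i ω ≤ 1)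
    (hl : 0 ≤ l) (c : ℝ) :
    Integrable (fun ω ↦ exp (l * ∑ i ∈ s, ξ i ω - c)) μ := by
  refine (integrable_const (exp (l * #s - c))).mono'
    (continuous_exp.comp_aestronglyMeasurable
      (((aestronglyMeasurable_fun_sum _ hmeas).const_mul l).sub aestronglyMeasurable_const)) ?_
  filter_upwards [(Filter.eventually_all_finset s).2 hupper] with ω hω
  rw [norm_of_nonneg (exp_pos _).le, exp_le_exp]
  have : ∑ i ∈ s, ξ i ω ≤ #s := by simpa using sum_le_card_nsmul s (fun i ↦ ξ i ω) 1 hω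
  nlinarith

lemma supermartingale_expProcess [IsFiniteMeasure μ] (𝒢 : Filtration ℕ m₀)
    (hadapt : ∀ i, 1 ≤ i → i ≤ n → Measurable[𝒢 i] (ξ i))
    (hupper : ∀ i, 1 ≤ i → i ≤ n → ∀ᵐ ω ∂μ, ξ i ω ≤ 1) (hl : 0 ≤ l)
    (hmgf : ∀ i, 1 ≤ i → i ≤ n → μ[fun ω ↦ exp (l * ξ i ω - c)|𝒢 (i - 1)] ≤ᵐ[μ] 1) :
    Supermartingale (expProcess ξ n l c) 𝒢 μ := by
  have hsm := stronglyMeasurable_expProcess (l := l) (c := c) 𝒢 hadapt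
  have hmeas : ∀ i, 1 ≤ i → i ≤ n → AEStronglyMeasurable (ξ i) μ := fun i h1 h2 ↦
    ((hadapt i h1 h2).mono (𝒢.le i) le_rfl).aestronglyMeasurable
  have hint : ∀ k, Integrable (expProcess ξ n l c k) μ := fun k ↦
    integrable_exp_mul_sum_sub
      (fun i hi ↦ hmeas i (mem_Icc.1 hi).1 ((mem_Icc.1 hi).2.trans (min_le_right _ _)))
      (fun i hi ↦ hupper i (mem_Icc.1 hi).1 ((mem_Icc.1 hi).2.trans (min_le_right _ _))) hl _
  refine supermartingale_nat (fun k ↦ hsm k) hint fun k ↦ ?_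
  rcases lt_or_ge k n with hk | hk
  · have hZ : Integrable (fun ω ↦ exp (l * ξ (k + 1) ω - c)) μ := by
      simpa using integrable_exp_mul_sum_sub (s := {k + 1})
        (by simpa using hmeas (k + 1) (by omega) hk) (by simpa using hupper (k + 1) (by omega) hk)
        hl c
    have hmgf' := hmgf (k + 1) (by omega) hk
    rw [Nat.add_sub_cancel] at hmgf'
    rw [expProcess_succ_of_lt hk]
    filter_upwards [condExp_mul_of_stronglyMeasurable_left (hsm k)
      (expProcess_succ_of_lt hk ▸ hint (k + 1)) hZ, hmgf'] with ω hpull hle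
    rw [hpull]
    exact mul_le_of_le_one_right (exp_pos _).le hle
  · rw [expProcess_succ_of_le hk, condExp_of_stronglyMeasurable (𝒢.le k) (hsm k) (hint k)]

end expProcess

theorem measure_exists_sum_ge_le_exp [IsProbabilityMeasure μ] (𝒢 : Filtration ℕ m₀)
    {ξ : ℕ → Ω → ℝ} {n : ℕ} {b l c : ℝ} (hb : 0 < 1 + b)
    (hadapt : ∀ i, 1 ≤ i → i ≤ n → Measurable[𝒢 i] (ξ i))
    (hint : ∀ i, 1 ≤ i → i ≤ n → Integrable (ξ i) μ)
    (hmart : ∀ i, 1 ≤ i → i ≤ n → μ[ξ i|𝒢 (i - 1)] =ᵐ[μ] 0)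
    (hbound : ∀ i, 1 ≤ i → i ≤ n → ∀ᵐ ω ∂μ, -b ≤ ξ i ω ∧ ξ i ω ≤ 1)
    (hl : 0 ≤ l) (hc : 0 ≤ c) (hA : twoPointMGF b l ≤ exp c) (x : ℝ) :
    μ {ω | ∃ k, 1 ≤ k ∧ k ≤ n ∧ x ≤ ∑ i ∈ Icc 1 k, ξ i ω}
      ≤ ENNReal.ofReal (exp (n * c - l * x)) := by
  have hsuper : Supermartingale (expProcess ξ n l c) 𝒢 μ :=
    supermartingale_expProcess 𝒢 hadapt (fun i h1 h2 ↦ (hbound i h1 h2).mono fun _ h ↦ h.2) hl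
      fun i h1 h2 ↦ condExp_exp_mul_sub_le_one (𝒢.le _) hb (hint i h1 h2) (hmart i h1 h2)
        (hbound i h1 h2) hA
  set ε := exp (l * x - n * c)
  set E := {ω | ∃ k ≤ n, ε ≤ expProcess ξ n l c k ω}
  have hstart : μ[expProcess ξ n l c 0] = 1 := by simp [expProcess]
  have hmax : ε * μ.real E ≤ 1 :=
    hstart ▸ hsuper.mul_measureReal_exists_le_le (fun k ω ↦ (exp_pos _).le) ε n
  have hsub : {ω | ∃ k, 1 ≤ k ∧ k ≤ n ∧ x ≤ ∑ i ∈ Icc 1 k, ξ i ω} ⊆ E := by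
    rintro ω ⟨k, -, hkn, hxk⟩
    refine ⟨k, hkn, ?_⟩
    rw [expProcess, min_eq_left hkn, exp_le_exp]
    have : (k : ℝ) * c ≤ n * c := by gcongr
    nlinarith
  calc μ {ω | ∃ k, 1 ≤ k ∧ k ≤ n ∧ x ≤ ∑ i ∈ Icc 1 k, ξ i ω} ≤ μ E := measure_mono hsub
    _ = ENNReal.ofReal (μ.real E) := (ofReal_measureReal (measure_ne_top μ E)).symm
    _ ≤ ENNReal.ofReal (exp (n * c - l * x)) := by
      refine ENNReal.ofReal_le_ofReal ?_
      calc μ.real E = exp (n * c - l * x) * (ε * μ.real E) := by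
            rw [← mul_assoc, ← exp_add]; simp
        _ ≤ exp (n * c - l * x) := mul_le_of_le_one_right (exp_pos _).le hmax

end

theorem azuma_hoeffding_refined {Ω : Type*} [m : MeasurableSpace Ω] (μ : Measure Ω)
    [IsProbabilityMeasure μ] (n : ℕ) (ℱ : ℕ → MeasurableSpace Ω)
    (hmono : Monotone ℱ) (hle : ∀ i, ℱ i ≤ m)
    (ξ : ℕ → Ω → ℝ) (b : ℝ) (hb : 0 < b)
    (hadapt : ∀ i, 1 ≤ i → i ≤ n → Measurable[ℱ i] (ξ i))
    (hint : ∀ i, 1 ≤ i → i ≤ n → Integrable (ξ i) μ)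
    (hmart : ∀ i, 1 ≤ i → i ≤ n → (μ[ξ i | ℱ (i-1)]) =ᵐ[μ] 0)
    (hbound : ∀ i, 1 ≤ i → i ≤ n → ∀ᵐ ω ∂μ, -b ≤ ξ i ω ∧ ξ i ω ≤ 1)
    (x : ℝ) (hx : 0 ≤ x) :
    μ {ω | ∃ k, 1 ≤ k ∧ k ≤ n ∧ x ≤ ∑ i ∈ Finset.Icc 1 k, ξ i ω}
      ≤ ENNReal.ofReal
          (Real.exp (-(2*x^2 / min ((n:ℝ)*(1+b)^2) (4*((n:ℝ)*b + x/3))))) := by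
  obtain rfl | hn := n.eq_zero_or_pos
  · simp
  obtain ⟨l, c, hl, hc, hA, hexp⟩ := exists_refined_exponent (N := n) (by positivity) hb hx
  refine (measure_exists_sum_ge_le_exp ⟨ℱ, hmono, hle⟩ (by linarith) hadapt hint hmart hbound
    hl hc hA x).trans ?_
  exact ENNReal.ofReal_le_ofReal (exp_le_exp.2 hexp)
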